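/- The SLD information is bounded by the C_L quantum information (Lemma): In the spectral-family setup, C_L(θ) − H(θ) = 8 Σ over ordered pairs (j,k) with j ≠ k and p_j(θ)+p_k(θ) > 0 of (p_j(θ) p_k(θ)/(p_j(θ)+p_k(θ))) |⟨w_j'(θ), w_k(θ)⟩|². In particular H(θ) ≤ C_L(θ), with equality if and only if ⟨w_j'(θ), w_k(θ)⟩ = 0 for all j ≠ k with p_j(θ) > 0 and p_k(θ) > 0. -/

import Mathlib

open scoped BigOperators

noncomputable section

/-- The Hermitian inner product on `Fin d → ℂ`, conjugate-linear in the first argument. -/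
def inn {d : ℕ} (x y : Fin d → ℂ) : ℂ := ∑ i, (starRingEnd ℂ) (x i) * y i

/-!
Differentiating `⟨w_j, w_k⟩ = δ_jk` gives `⟨w_j', w_k⟩ = -conj ⟨w_k', w_j⟩`, so
`|⟨w_j', w_k⟩|²` is symmetric in `(j, k)`. Pairwise,
`(p_j + p_k) - (p_j - p_k)² / (p_j + p_k) = 4 p_j p_k / (p_j + p_k)`, and by this symmetry the
sum over `j < k` is half the sum over `j ≠ k`. The resulting sum has nonnegative terms, which
vanish exactly when `p_j p_k ⟨w_j', w_k⟩ = 0`.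
-/

open Finset

lemma inn_eq_conj_inn {d : ℕ} (x y : Fin d → ℂ) : inn x y = starRingEnd ℂ (inn y x) := by
  simp [inn, map_sum, mul_comm]

lemma HasDerivAt.inn {d : ℕ} {f g : ℝ → Fin d → ℂ} {f' g' : Fin d → ℂ} {θ : ℝ}
    (hf : HasDerivAt f f' θ) (hg : HasDerivAt g g' θ) :
    HasDerivAt (fun t => inn (f t) (g t)) (inn f' (g θ) + inn (f θ) g') θ := by
  have hsum := HasDerivAt.fun_sum (u := univ) fun i _ =>
    (hasDerivAt_pi.mp hf i).star.mul (hasDerivAt_pi.mp hg i)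
  simpa [_root_.inn, sum_add_distrib] using hsum

lemma inn_deriv_add_inn_deriv_eq_zero {d : ℕ} {f g : ℝ → Fin d → ℂ} {f' g' : Fin d → ℂ}
    {θ : ℝ} {c : ℂ} (hfg : ∀ t, inn (f t) (g t) = c)
    (hf : HasDerivAt f f' θ) (hg : HasDerivAt g g' θ) :
    inn f' (g θ) + inn (f θ) g' = 0 := by
  have hconst : (fun t => inn (f t) (g t)) = fun _ => c := funext hfg
  exact (hconst ▸ hf.inn hg).unique (hasDerivAt_const θ c)

lemma norm_inn_deriv_comm_of_orthonormal {d : ℕ} {w w' : Fin d → ℝ → Fin d → ℂ}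
    (horth : ∀ θ (j k : Fin d), inn (w j θ) (w k θ) = if j = k then 1 else 0)
    (hw' : ∀ (k : Fin d) θ, HasDerivAt (w k) (w' k θ) θ) (θ : ℝ) (j k : Fin d) :
    ‖inn (w' j θ) (w k θ)‖ = ‖inn (w' k θ) (w j θ)‖ := by
  have hskew := inn_deriv_add_inn_deriv_eq_zero (horth · j k) (hw' j θ) (hw' k θ)
  rw [eq_neg_of_add_eq_zero_left hskew, inn_eq_conj_inn, norm_neg, Complex.norm_conj]

-- No hypothesis on `a + b`: at `a + b = 0` both sides are `0` since `x / 0 = 0`.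
lemma add_sub_sq_sub_div_add {K : Type*} [Field K] (a b : K) :
    a + b - (a - b) ^ 2 / (a + b) = 4 * (a * b / (a + b)) := by
  rcases eq_or_ne (a + b) 0 with hab | hab
  · simp [hab]
  · field_simp
    ring

lemma Finset.sum_sum_ite_ne_eq_two_nsmul {ι M : Type*} [Fintype ι] [LinearOrder ι]
    [AddCommMonoid M] (f : ι → ι → M) (hf : ∀ j k, f j k = f k j) :
    ∑ j, ∑ k, (if j ≠ k then f j k else 0) = 2 • ∑ j, ∑ k, if j < k then f j k else 0 := by
  have hsplit : ∀ j k, (if j ≠ k then f j k else 0)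
      = (if j < k then f j k else 0) + (if k < j then f k j else 0) := by
    intro j k
    rcases lt_trichotomy j k with h | rfl | h
    · simp [h, h.ne, h.not_gt]
    · simp
    · simp [h, h.ne', h.not_gt, hf j k]
  simp only [hsplit, sum_add_distrib]
  rw [sum_comm (f := fun j k => if k < j then f k j else 0), two_nsmul]

section PairSums

variable {ι : Type*} [LinearOrder ι] {a : ι → ℝ} {A : ι → ι → ℝ}

lemma ite_ne_pair_nonneg (ha : ∀ j, 0 ≤ a j) (hA : ∀ j k, 0 ≤ A j k) (j k : ι) :
    0 ≤ if j ≠ k ∧ 0 < a j + a k then a j * a k / (a j + a k) * A j k else 0 := by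
  split_ifs with h
  · exact mul_nonneg (div_nonneg (mul_nonneg (ha j) (ha k)) h.2.le) (hA j k)
  · exact le_rfl

lemma ite_ne_pair_eq_zero_iff (ha : ∀ j, 0 ≤ a j) (j k : ι) :
    (if j ≠ k ∧ 0 < a j + a k then a j * a k / (a j + a k) * A j k else 0) = 0
      ↔ (j ≠ k → 0 < a j → 0 < a k → A j k = 0) := by
  split_ifs with h
  · rcases (ha j).eq_or_lt with hj | hj
    · simp [← hj]
    rcases (ha k).eq_or_lt with hk | hk
    · simp [← hk]
    simp [h.1, hj, hk, hj.ne', hk.ne', h.2.ne']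
  · simp only [true_iff]
    intro hjk hj hk
    exact absurd ⟨hjk, add_pos hj hk⟩ h

variable [Fintype ι]

lemma sum_lt_pairs_sub_eq_two_mul_sum_ne_pairs (hA : ∀ j k, A j k = A k j) :
    ∑ j, ∑ k, (if j < k ∧ 0 < a j + a k then (a j + a k) * A j k else 0)
      - ∑ j, ∑ k, (if j < k ∧ 0 < a j + a k then
          (a j - a k) ^ 2 / (a j + a k) * A j k else 0)
      = 2 * ∑ j, ∑ k, (if j ≠ k ∧ 0 < a j + a k then
          a j * a k / (a j + a k) * A j k else 0) := by
  set g : ι → ι → ℝ := fun j k =>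
    if 0 < a j + a k then a j * a k / (a j + a k) * A j k else 0 with hg
  have hg_comm : ∀ j k, g j k = g k j := fun j k => by
    simp only [hg, add_comm (a j), mul_comm (a j), hA j k]
  calc _ = ∑ j, ∑ k, (if j < k then 4 * g j k else 0) := by
        simp only [← sum_sub_distrib, ite_and, hg]
        refine sum_congr rfl fun j _ => sum_congr rfl fun k _ => ?_
        split_ifs
        · rw [← sub_mul, add_sub_sq_sub_div_add]
          ring
        all_goals simp
    _ = 2 * ∑ j, ∑ k, (if j ≠ k then g j k else 0) := by
        rw [sum_sum_ite_ne_eq_two_nsmul g hg_comm, two_nsmul]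
        simp only [← mul_ite_zero, ← mul_sum]
        ring
    _ = _ := by simp only [hg, ite_and]

lemma sum_ne_pairs_nonneg (ha : ∀ j, 0 ≤ a j) (hA : ∀ j k, 0 ≤ A j k) :
    0 ≤ ∑ j, ∑ k, (if j ≠ k ∧ 0 < a j + a k then a j * a k / (a j + a k) * A j k else 0) :=
  sum_nonneg fun j _ => sum_nonneg fun k _ => ite_ne_pair_nonneg ha hA j k

lemma sum_ne_pairs_eq_zero_iff (ha : ∀ j, 0 ≤ a j) (hA : ∀ j k, 0 ≤ A j k) :
    ∑ j, ∑ k, (if j ≠ k ∧ 0 < a j + a k then a j * a k / (a j + a k) * A j k else 0) = 0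
      ↔ ∀ j k, j ≠ k → 0 < a j → 0 < a k → A j k = 0 := by
  have hnonneg := ite_ne_pair_nonneg ha hA
  rw [sum_eq_zero_iff_of_nonneg fun j _ => sum_nonneg fun k _ => hnonneg j k]
  simp only [mem_univ, true_implies, sum_eq_zero_iff_of_nonneg fun k _ => hnonneg _ k,
    ite_ne_pair_eq_zero_iff ha]

end PairSums

theorem sld_le_CL_general {d : ℕ}
    (p : Fin d → ℝ → ℝ) (w : Fin d → ℝ → (Fin d → ℂ))
    (p' : Fin d → ℝ → ℝ) (w' : Fin d → ℝ → (Fin d → ℂ))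
    (horth : ∀ θ (j k : Fin d), inn (w j θ) (w k θ) = if j = k then 1 else 0)
    (hpnn : ∀ (k : Fin d) θ, 0 ≤ p k θ)
    (hw' : ∀ (k : Fin d) θ, HasDerivAt (w k) (w' k θ) θ)
    (CL H : ℝ → ℝ)
    (hCL : ∀ θ, CL θ = (∑ k, if 0 < p k θ then (p' k θ) ^ 2 / p k θ else 0)
        + 4 * ∑ j, ∑ k, (if j < k ∧ 0 < p j θ + p k θ then
            (p j θ + p k θ) * ‖inn (w' j θ) (w k θ)‖ ^ 2 else 0))
    (hH : ∀ θ, H θ = (∑ k, if 0 < p k θ then (p' k θ) ^ 2 / p k θ else 0)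
        + 4 * ∑ j, ∑ k, (if j < k ∧ 0 < p j θ + p k θ then
            (p j θ - p k θ) ^ 2 / (p j θ + p k θ) *
              ‖inn (w' j θ) (w k θ)‖ ^ 2 else 0)) :
    ∀ θ : ℝ,
      (CL θ - H θ = 8 * ∑ j, ∑ k, (if j ≠ k ∧ 0 < p j θ + p k θ then
          p j θ * p k θ / (p j θ + p k θ) *
            ‖inn (w' j θ) (w k θ)‖ ^ 2 else 0)) ∧
      H θ ≤ CL θ ∧
      (H θ = CL θ ↔ ∀ j k : Fin d, j ≠ k → 0 < p j θ → 0 < p k θ →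
        inn (w' j θ) (w k θ) = 0) := by
  intro θ
  have hA_comm (j k : Fin d) : ‖inn (w' j θ) (w k θ)‖ ^ 2 = ‖inn (w' k θ) (w j θ)‖ ^ 2 := by
    rw [norm_inn_deriv_comm_of_orthonormal horth hw']
  have hdiff : CL θ - H θ = 8 * ∑ j, ∑ k, (if j ≠ k ∧ 0 < p j θ + p k θ then
      p j θ * p k θ / (p j θ + p k θ) * ‖inn (w' j θ) (w k θ)‖ ^ 2 else 0) := by
    rw [hCL, hH, add_sub_add_left_eq_sub, ← mul_sub,
      sum_lt_pairs_sub_eq_two_mul_sum_ne_pairs (a := (p · θ)) hA_comm]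
    ring
  have hnonneg := sum_ne_pairs_nonneg (hpnn · θ) fun j k => sq_nonneg ‖inn (w' j θ) (w k θ)‖
  refine ⟨hdiff, by linarith, ?_⟩
  rw [eq_comm, ← sub_eq_zero, hdiff, mul_eq_zero, or_iff_right (by norm_num),
    sum_ne_pairs_eq_zero_iff (hpnn · θ) fun j k => sq_nonneg _]
  simp only [sq_eq_zero_iff, norm_eq_zero]

/-- **The SLD information is bounded by the `C_L` quantum information.**
`C_L(θ) − H(θ)` equals the displayed nonnegative sum over ordered pairs; in particular
`H(θ) ≤ C_L(θ)`, with equality iff `⟨w_j'(θ), w_k(θ)⟩ = 0` for all `j ≠ k` with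
`p_j(θ) > 0` and `p_k(θ) > 0`. -/
theorem sld_le_CL {d : ℕ} (hd : 1 ≤ d)
    (p : Fin d → ℝ → ℝ) (w : Fin d → ℝ → (Fin d → ℂ))
    (p' : Fin d → ℝ → ℝ) (w' : Fin d → ℝ → (Fin d → ℂ))
    (horth : ∀ θ (j k : Fin d), inn (w j θ) (w k θ) = if j = k then 1 else 0)
    (hpnn : ∀ (k : Fin d) θ, 0 ≤ p k θ) (hpsum : ∀ θ, ∑ k, p k θ = 1)
    (hp' : ∀ (k : Fin d) θ, HasDerivAt (p k) (p' k θ) θ)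
    (hw' : ∀ (k : Fin d) θ, HasDerivAt (w k) (w' k θ) θ)
    (hdich : ∀ k : Fin d, (∀ θ, 0 < p k θ) ∨ (∀ θ, p k θ = 0))
    (CL H : ℝ → ℝ)
    (hCL : ∀ θ, CL θ = (∑ k, if 0 < p k θ then (p' k θ) ^ 2 / p k θ else 0)
        + 4 * ∑ j, ∑ k, (if j < k ∧ 0 < p j θ + p k θ then
            (p j θ + p k θ) * ‖inn (w' j θ) (w k θ)‖ ^ 2 else 0))
    (hH : ∀ θ, H θ = (∑ k, if 0 < p k θ then (p' k θ) ^ 2 / p k θ else 0)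
        + 4 * ∑ j, ∑ k, (if j < k ∧ 0 < p j θ + p k θ then
            (p j θ - p k θ) ^ 2 / (p j θ + p k θ) *
              ‖inn (w' j θ) (w k θ)‖ ^ 2 else 0)) :
    ∀ θ : ℝ,
      (CL θ - H θ = 8 * ∑ j, ∑ k, (if j ≠ k ∧ 0 < p j θ + p k θ then
          p j θ * p k θ / (p j θ + p k θ) *
            ‖inn (w' j θ) (w k θ)‖ ^ 2 else 0)) ∧
      H θ ≤ CL θ ∧
      (H θ = CL θ ↔ ∀ j k : Fin d, j ≠ k → 0 < p j θ → 0 < p k θ →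
        inn (w' j θ) (w k θ) = 0) :=
  sld_le_CL_general p w p' w' horth hpnn hw' CL H hCL hH
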